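/- The 2×2 matrix witnesses: γ₂(T₂) = 2/√3, where T₂ = [[1,0],[1,1]]; equivalently the γ₂ norm of the 3×2 incidence matrix A = [[1,1],[1,0],[0,1]] equals 2/√3. -/

import Mathlib

open Matrix Real

/-- `‖B‖_{2→∞}`: the largest Euclidean norm of a row of `B`. -/
noncomputable def rowNorm {m n : Type*} [Fintype m] [Fintype n] (B : Matrix m n ℝ) : ℝ :=
  ⨆ i, Real.sqrt (∑ j, B i j ^ 2)

/-- `‖C‖_{1→2}`: the largest Euclidean norm of a column of `C`. -/
noncomputable def colNorm {m n : Type*} [Fintype m] [Fintype n] (C : Matrix m n ℝ) : ℝ :=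
  ⨆ j, Real.sqrt (∑ i, C i j ^ 2)

/-- The `γ₂` factorization norm of a real matrix. -/
noncomputable def gamma2 {m n : Type*} [Fintype m] [Fintype n] (A : Matrix m n ℝ) : ℝ :=
  sInf {t | ∃ (k : ℕ) (B : Matrix m (Fin k) ℝ) (C : Matrix (Fin k) n ℝ),
    A = B * C ∧ t = rowNorm B * colNorm C}

/-!
Upper bound: `T₂` and the incidence matrix factor through unit rows on the left and two columns
of length `2/√3` on the right.

Lower bound: let `B * C` contain `T₂` in rows `i₀, i₁` and columns `j₀, j₁`, with rows `b₀, b₁` of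
`B` and columns `c₀, c₁` of `C`. Pairing with the dual certificate `Y = [[2,-1],[2,2]]`
(`⟨Y, T₂⟩ = 6`, weights `P = diag(1/3, 2/3)`, `Q = diag(2/3, 1/3)`) and summing a rank-two sum of
squares over the inner index gives `12 τ ≤ τ² (‖b₀‖² + 2‖b₁‖²) + 6‖c₀‖² + 3‖c₁‖²` for every `τ`.
With `R = ‖B‖²_{2→∞}` and `S = ‖C‖²_{1→2}` the quadratic `R τ² - 4 τ + 3 S` is thus nonnegative,
and its discriminant yields `4 ≤ 3 R S`.
-/

section Norms

variable {m n : Type*} [Fintype m] [Fintype n]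

lemma rowNorm_nonneg (B : Matrix m n ℝ) : 0 ≤ rowNorm B :=
  Real.iSup_nonneg fun _ => Real.sqrt_nonneg _

lemma colNorm_nonneg (C : Matrix m n ℝ) : 0 ≤ colNorm C :=
  Real.iSup_nonneg fun _ => Real.sqrt_nonneg _

lemma sum_sq_le_rowNorm_sq (B : Matrix m n ℝ) (i : m) : ∑ j, B i j ^ 2 ≤ rowNorm B ^ 2 :=
  (Real.sqrt_le_iff.mp
    (le_ciSup (f := fun i => Real.sqrt (∑ j, B i j ^ 2)) (Finite.bddAbove_range _) i)).2

lemma sum_sq_le_colNorm_sq (C : Matrix m n ℝ) (j : n) : ∑ i, C i j ^ 2 ≤ colNorm C ^ 2 :=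
  (Real.sqrt_le_iff.mp
    (le_ciSup (f := fun j => Real.sqrt (∑ i, C i j ^ 2)) (Finite.bddAbove_range _) j)).2

lemma rowNorm_eq_of_forall_sum_sq_eq [Nonempty m] {B : Matrix m n ℝ} {a : ℝ} (ha : 0 ≤ a)
    (h : ∀ i, ∑ j, B i j ^ 2 = a ^ 2) : rowNorm B = a := by
  simp only [rowNorm, h, Real.sqrt_sq ha, ciSup_const]

lemma colNorm_eq_of_forall_sum_sq_eq [Nonempty n] {C : Matrix m n ℝ} {a : ℝ} (ha : 0 ≤ a)
    (h : ∀ j, ∑ i, C i j ^ 2 = a ^ 2) : colNorm C = a := by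
  simp only [colNorm, h, Real.sqrt_sq ha, ciSup_const]

end Norms

lemma T2_pairing_le (τ u₀ u₁ v₀ v₁ : ℝ) :
    2 * τ * (2 * u₀ * v₀ - u₀ * v₁ + 2 * u₁ * v₀ + 2 * u₁ * v₁) ≤
      τ ^ 2 * (u₀ ^ 2 + 2 * u₁ ^ 2) + 6 * v₀ ^ 2 + 3 * v₁ ^ 2 := by
  nlinarith [sq_nonneg (τ * u₀ - 2 * v₀ + v₁), sq_nonneg (τ * u₁ - v₀ - v₁)]

lemma four_le_three_mul_of_T2_pairing {ι : Type*} [Fintype ι] {x y p q : ι → ℝ} {R S : ℝ}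
    (hxp : ∑ l, x l * p l = 1) (hxq : ∑ l, x l * q l = 0)
    (hyp : ∑ l, y l * p l = 1) (hyq : ∑ l, y l * q l = 1)
    (hx : ∑ l, x l ^ 2 ≤ R) (hy : ∑ l, y l ^ 2 ≤ R)
    (hp : ∑ l, p l ^ 2 ≤ S) (hq : ∑ l, q l ^ 2 ≤ S) :
    4 ≤ 3 * (R * S) := by
  have hquad : ∀ τ : ℝ, 0 ≤ R * (τ * τ) + (-4) * τ + 3 * S := by
    intro τ
    have hsum := Finset.sum_le_sum fun l (_ : l ∈ Finset.univ) =>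
      T2_pairing_le τ (x l) (y l) (p l) (q l)
    have hlhs : ∀ l, 2 * τ * (2 * x l * p l - x l * q l + 2 * y l * p l + 2 * y l * q l) =
        4 * τ * (x l * p l) - 2 * τ * (x l * q l) + 4 * τ * (y l * p l) + 4 * τ * (y l * q l) :=
      fun l => by ring
    have hrhs : ∀ l, τ ^ 2 * (x l ^ 2 + 2 * y l ^ 2) + 6 * p l ^ 2 + 3 * q l ^ 2 =
        τ ^ 2 * x l ^ 2 + 2 * τ ^ 2 * y l ^ 2 + 6 * p l ^ 2 + 3 * q l ^ 2 :=
      fun l => by ring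
    simp only [hlhs, hrhs, Finset.sum_add_distrib, Finset.sum_sub_distrib, ← Finset.mul_sum,
      hxp, hxq, hyp, hyq] at hsum
    nlinarith [mul_le_mul_of_nonneg_left hx (sq_nonneg τ),
      mul_le_mul_of_nonneg_left hy (sq_nonneg τ)]
  have hdiscrim := discrim_le_zero hquad
  rw [discrim] at hdiscrim
  linarith

lemma two_div_sqrt_three_le_rowNorm_mul_colNorm {m n κ : Type*} [Fintype m] [Fintype n]
    [Fintype κ] {A : Matrix m n ℝ} {B : Matrix m κ ℝ} {C : Matrix κ n ℝ} (hA : A = B * C)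
    {i₀ i₁ : m} {j₀ j₁ : n} (h₀₀ : A i₀ j₀ = 1) (h₀₁ : A i₀ j₁ = 0) (h₁₀ : A i₁ j₀ = 1)
    (h₁₁ : A i₁ j₁ = 1) :
    2 / √3 ≤ rowNorm B * colNorm C := by
  subst hA
  have h := four_le_three_mul_of_T2_pairing h₀₀ h₀₁ h₁₀ h₁₁
    (sum_sq_le_rowNorm_sq B i₀) (sum_sq_le_rowNorm_sq B i₁)
    (sum_sq_le_colNorm_sq C j₀) (sum_sq_le_colNorm_sq C j₁)
  have hsqrt : 0 < √3 := by positivity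
  rw [div_le_iff₀ hsqrt]
  have hprod := mul_nonneg (rowNorm_nonneg B) (colNorm_nonneg C)
  refine le_of_pow_le_pow_left₀ two_ne_zero (mul_nonneg hprod hsqrt.le) ?_
  rw [mul_pow, Real.sq_sqrt (by norm_num)]
  linarith [mul_pow (rowNorm B) (colNorm C) 2]

noncomputable def rightFactor : Matrix (Fin 2) (Fin 2) ℝ := !![2 / √3, 1 / √3; 0, 1]

noncomputable def leftFactorT2 : Matrix (Fin 2) (Fin 2) ℝ := !![√3 / 2, -1 / 2; √3 / 2, 1 / 2]

noncomputable def leftFactorIncidence : Matrix (Fin 3) (Fin 2) ℝ :=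
  !![√3 / 2, 1 / 2; √3 / 2, -1 / 2; 0, 1]

lemma T2_eq_mul : !![(1 : ℝ), 0; 1, 1] = leftFactorT2 * rightFactor := by
  ext i j
  fin_cases i <;> fin_cases j <;>
    simp [leftFactorT2, rightFactor, Matrix.mul_apply, Fin.sum_univ_two] <;> field_simp <;> norm_num

lemma incidence_eq_mul :
    !![(1 : ℝ), 1; 1, 0; 0, 1] = leftFactorIncidence * rightFactor := by
  ext i j
  fin_cases i <;> fin_cases j <;>
    simp [leftFactorIncidence, rightFactor, Matrix.mul_apply, Fin.sum_univ_two] <;> field_simp <;>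
    norm_num

lemma rowNorm_leftFactorT2 : rowNorm leftFactorT2 = 1 :=
  rowNorm_eq_of_forall_sum_sq_eq zero_le_one fun i => by
    fin_cases i <;> simp [leftFactorT2, Fin.sum_univ_two, div_pow] <;> norm_num

lemma rowNorm_leftFactorIncidence : rowNorm leftFactorIncidence = 1 :=
  rowNorm_eq_of_forall_sum_sq_eq zero_le_one fun i => by
    fin_cases i <;> simp [leftFactorIncidence, Fin.sum_univ_two, div_pow] <;> norm_num

lemma colNorm_rightFactor : colNorm rightFactor = 2 / √3 :=
  colNorm_eq_of_forall_sum_sq_eq (by positivity) fun j => by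
    fin_cases j <;> simp [rightFactor, Fin.sum_univ_two, div_pow]; norm_num

/-- `γ₂(T₂) = 2/√3`, where `T₂ = [[1,0],[1,1]]`, and likewise the
γ₂ norm of the 3×2 incidence matrix `[[1,1],[1,0],[0,1]]` equals `2/√3`. -/
theorem gamma2_T2 :
    gamma2 (Matrix.of !![(1 : ℝ), 0; 1, 1]) = 2 / Real.sqrt 3 ∧
    gamma2 (Matrix.of !![(1 : ℝ), 1; 1, 0; 0, 1]) = 2 / Real.sqrt 3 := by
  refine ⟨IsLeast.csInf_eq ⟨⟨2, leftFactorT2, rightFactor, T2_eq_mul, ?_⟩, ?_⟩,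
    IsLeast.csInf_eq ⟨⟨2, leftFactorIncidence, rightFactor, incidence_eq_mul, ?_⟩, ?_⟩⟩
  · rw [rowNorm_leftFactorT2, colNorm_rightFactor, one_mul]
  · rintro _ ⟨k, B, C, hA, rfl⟩
    exact two_div_sqrt_three_le_rowNorm_mul_colNorm hA (i₀ := 0) (i₁ := 1) (j₀ := 0) (j₁ := 1)
      rfl rfl rfl rfl
  · rw [rowNorm_leftFactorIncidence, colNorm_rightFactor, one_mul]
  · rintro _ ⟨k, B, C, hA, rfl⟩
    exact two_div_sqrt_three_le_rowNorm_mul_colNorm hA (i₀ := 1) (i₁ := 0) (j₀ := 0) (j₁ := 1)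
      rfl rfl rfl rfl
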